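/- arXiv:2302.13073 — 2 statements merged into one kernel-verified Lean document; each statement's English description precedes it below -/
import Mathlib

section
/- Let P > 0 and let p, q : [0,∞) → ℝ be continuous with lim_{t→∞} p(t) = p∞ and lim_{t→∞} q(t) = q∞ for real constants p∞, q∞. If g is the (unique, globally defined) continuously differentiable solution of g′(t) = −P·g(t)³ + (P/√2)·g(t)² + p(t)·g(t) + q(t)/√2 with g(0) = 1/√2, then lim_{t→∞} g(t) exists, and its value r satisfies −P·r³ + (P/√2)·r² + p∞·r + q∞/√2 = 0, i.e., r is a real root of the limiting cubic. -/
/-!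
For large `t` the right-hand side at a fixed level `c` has the sign of the limiting cubic `F c`,
so once `F c ≠ 0` the level `c` is a one-way barrier: `g` crosses it at most once more. Since the
cubic term dominates for large `|y|`, barriers at `±M` trap `g` in a bounded interval, and every
level strictly between `liminf g` and `limsup g` must be one of the finitely many roots of `F`;
hence `g` converges, to `r` say. Then `g' → F r`, and a convergent function whose derivative
converges has derivative tending to `0` (mean value theorem on `[t, t + 1]`).
-/

open Set Filter Topology

theorem cubic_neg_of_abs_add_lt {P α a b y : ℝ} (hy : 1 ≤ y) (h : |α| + |a| + |b| < P * y) :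
    -P * y ^ 3 + α * y ^ 2 + a * y + b < 0 := by
  have hα : α * y ^ 2 ≤ |α| * y ^ 2 := by gcongr; exact le_abs_self α
  have ha : a * y ≤ |a| * y ^ 2 := by
    calc a * y ≤ |a| * y := by gcongr; exact le_abs_self a
      _ ≤ |a| * y ^ 2 := by gcongr; nlinarith
  have hb : b ≤ |b| * y ^ 2 :=
    (le_abs_self b).trans (le_mul_of_one_le_right (abs_nonneg b) (by nlinarith))
  have hneg : y ^ 2 * (|α| + |a| + |b| - P * y) < 0 :=
    mul_neg_of_pos_of_neg (by positivity) (by linarith)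
  linarith

theorem cubic_pos_of_abs_add_lt {P α a b y : ℝ} (hy : 1 ≤ y) (h : |α| + |a| + |b| < P * y) :
    0 < -P * (-y) ^ 3 + α * (-y) ^ 2 + a * (-y) + b := by
  have := cubic_neg_of_abs_add_lt (P := P) (α := -α) (a := a) (b := -b) hy
    (by rwa [abs_neg, abs_neg])
  linarith

theorem finite_setOf_cubic_eq_zero {P α β γ : ℝ} (hP : P ≠ 0) :
    {y : ℝ | -P * y ^ 3 + α * y ^ 2 + β * y + γ = 0}.Finite := by
  refine (Polynomial.finite_setOfPred_isRoot
    (Cubic.ne_zero_of_a_ne_zero (P := ⟨-P, α, β, γ⟩) (neg_ne_zero.2 hP))).subset fun y hy => ?_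
  simpa [Cubic.toPoly] using hy

theorem exists_tendsto_of_eventually_le_or_ge {α : Type*} {l : Filter α} [l.NeBot] {g : α → ℝ}
    {S : Set ℝ} (hS : S.Finite) (hbdd : IsBoundedUnder (· ≤ ·) l fun t => |g t|)
    (hlevel : ∀ c ∉ S, (∀ᶠ t in l, g t ≤ c) ∨ ∀ᶠ t in l, c ≤ g t) : ∃ L, Tendsto g l (𝓝 L) := by
  obtain ⟨hle, hge⟩ := isBoundedUnder_le_abs.1 hbdd
  refine ⟨limsup g l, tendsto_of_liminf_eq_limsup ?_ rfl hle hge⟩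
  by_contra hne
  have hlt := (liminf_le_limsup hle hge).lt_of_ne hne
  obtain ⟨c, ⟨hlc, hcL⟩, hcS⟩ := ((Ioo_infinite hlt).sdiff hS).nonempty
  rcases hlevel c hcS with h | h
  · exact (limsup_le_of_le hge.isCoboundedUnder_le h).not_gt hcL
  · exact (le_liminf_of_le hle.isCoboundedUnder_ge h).not_gt hlc

theorem eq_zero_of_tendsto_of_tendsto_deriv {g g' : ℝ → ℝ} {L D : ℝ}
    (hderiv : ∀ᶠ t in atTop, HasDerivAt g (g' t) t)
    (hg : Tendsto g atTop (𝓝 L)) (hg' : Tendsto g' atTop (𝓝 D)) : D = 0 := by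
  obtain ⟨T, hT⟩ := eventually_atTop.1 hderiv
  have hn : Tendsto (fun n : ℕ => T + n) atTop atTop :=
    tendsto_atTop_add_const_left _ _ tendsto_natCast_atTop_atTop
  have hmvt (n : ℕ) : ∃ ξ ∈ Ioo (T + n) (T + n + 1), g' ξ = g (T + n + 1) - g (T + n) := by
    have hTx {x : ℝ} (hx : T + n ≤ x) : T ≤ x := le_trans (by simp) hx
    obtain ⟨ξ, hξ, h⟩ := exists_hasDerivAt_eq_slope g g' (lt_add_one (T + n))
      (fun x hx => (hT x (hTx hx.1)).continuousAt.continuousWithinAt)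
      (fun x hx => hT x (hTx hx.1.le))
    exact ⟨ξ, hξ, by simpa using h⟩
  choose ξ hξ hξg using hmvt
  have hξ_top : Tendsto ξ atTop atTop := tendsto_atTop_mono (fun n => (hξ n).1.le) hn
  refine tendsto_nhds_unique (hg'.comp hξ_top) ?_
  simp only [Function.comp_def, hξg]
  simpa using (hg.comp (tendsto_atTop_add_const_right _ 1 hn)).sub (hg.comp hn)

section ScalarODE

variable {f : ℝ → ℝ → ℝ} {g : ℝ → ℝ} {a T c : ℝ}

theorem le_of_hasDerivWithinAt_of_rhs_neg
    (hode : ∀ t ∈ Ici a, HasDerivWithinAt g (f t (g t)) (Ici a) t) (hT : a ≤ T)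
    (hneg : ∀ t ∈ Ici T, f t c < 0) (hgT : g T ≤ c) : ∀ t ∈ Ici T, g t ≤ c := fun t ht =>
  image_le_of_deriv_right_lt_deriv_boundary (B := fun _ => c) (B' := 0)
    (fun x hx => (hode x (hT.trans hx.1)).continuousWithinAt.mono (Icc_subset_Ici_self.trans
      (Ici_subset_Ici.2 hT)))
    (fun x hx => (hode x (hT.trans hx.1)).mono (Ici_subset_Ici.2 (hT.trans hx.1))) hgT
    (fun _ => hasDerivAt_const _ _) (fun x hx hx' => by simpa [hx'] using hneg x hx.1) ⟨ht, le_rfl⟩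

theorem ge_of_hasDerivWithinAt_of_rhs_pos
    (hode : ∀ t ∈ Ici a, HasDerivWithinAt g (f t (g t)) (Ici a) t) (hT : a ≤ T)
    (hpos : ∀ t ∈ Ici T, 0 < f t c) (hgT : c ≤ g T) : ∀ t ∈ Ici T, c ≤ g t := by
  have := le_of_hasDerivWithinAt_of_rhs_neg (f := fun t y => -f t (-y)) (g := -g) (c := -c)
    (fun t ht => by simpa using (hode t ht).neg) hT (fun t ht => by simpa using hpos t ht)
    (neg_le_neg hgT)
  simpa using this

theorem eventually_le_or_ge_of_tendsto_rhs
    (hode : ∀ t ∈ Ici a, HasDerivWithinAt g (f t (g t)) (Ici a) t) {F : ℝ}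
    (hF : Tendsto (fun t => f t c) atTop (𝓝 F)) (hF0 : F ≠ 0) :
    (∀ᶠ t in atTop, g t ≤ c) ∨ ∀ᶠ t in atTop, c ≤ g t := by
  rcases hF0.lt_or_gt with hneg | hpos
  · obtain ⟨T, hT⟩ := eventually_atTop.1
      ((hF.eventually (gt_mem_nhds hneg)).and (eventually_ge_atTop a))
    by_cases h : ∃ t₀ ≥ T, g t₀ ≤ c
    · obtain ⟨t₀, ht₀, hgt₀⟩ := h
      exact .inl (eventually_atTop.2 ⟨t₀, le_of_hasDerivWithinAt_of_rhs_neg hode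
        ((hT T le_rfl).2.trans ht₀) (fun t ht => (hT t (ht₀.trans ht)).1) hgt₀⟩)
    · push Not at h
      exact .inr (eventually_atTop.2 ⟨T, fun t ht => (h t ht).le⟩)
  · obtain ⟨T, hT⟩ := eventually_atTop.1
      ((hF.eventually (lt_mem_nhds hpos)).and (eventually_ge_atTop a))
    by_cases h : ∃ t₀ ≥ T, c ≤ g t₀
    · obtain ⟨t₀, ht₀, hgt₀⟩ := h
      exact .inr (eventually_atTop.2 ⟨t₀, ge_of_hasDerivWithinAt_of_rhs_pos hode
        ((hT T le_rfl).2.trans ht₀) (fun t ht => (hT t (ht₀.trans ht)).1) hgt₀⟩)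
    · push Not at h
      exact .inl (eventually_atTop.2 ⟨T, fun t ht => (h t ht).le⟩)

theorem isBoundedUnder_abs_of_rhs_neg_pos
    (hode : ∀ t ∈ Ici a, HasDerivWithinAt g (f t (g t)) (Ici a) t) {M₀ : ℝ}
    (hM₀ : ∀ᶠ t in atTop, ∀ M ≥ M₀, f t M < 0 ∧ 0 < f t (-M)) :
    IsBoundedUnder (· ≤ ·) atTop fun t => |g t| := by
  obtain ⟨T, hT⟩ := eventually_atTop.1 (hM₀.and (eventually_ge_atTop a))
  set M := max M₀ |g T|
  have hup := le_of_hasDerivWithinAt_of_rhs_neg hode (hT T le_rfl).2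
    (fun t ht => ((hT t ht).1 M (le_max_left _ _)).1) ((le_abs_self _).trans (le_max_right _ _))
  have hlow := ge_of_hasDerivWithinAt_of_rhs_pos hode (hT T le_rfl).2
    (fun t ht => ((hT t ht).1 M (le_max_left _ _)).2)
    ((neg_le_neg (le_max_right _ _)).trans (neg_abs_le _))
  exact isBoundedUnder_of_eventually_le (a := M)
    (eventually_atTop.2 ⟨T, fun t ht => abs_le.2 ⟨hlow t ht, hup t ht⟩⟩)

end ScalarODE

noncomputable def acgnField (P a b y : ℝ) : ℝ :=
  -P * y ^ 3 + (P / √2) * y ^ 2 + a * y + b / √2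

theorem Filter.Tendsto.acgnField {α : Type*} {l : Filter α} {P a₀ b₀ y₀ : ℝ} {a b y : α → ℝ}
    (ha : Tendsto a l (𝓝 a₀)) (hb : Tendsto b l (𝓝 b₀)) (hy : Tendsto y l (𝓝 y₀)) :
    Tendsto (fun t => acgnField P (a t) (b t) (y t)) l (𝓝 (acgnField P a₀ b₀ y₀)) :=
  ((((hy.pow 3).const_mul (-P)).add ((hy.pow 2).const_mul _)).add (ha.mul hy)).add
    (hb.div_const _)

theorem eventually_acgnField_neg_and_pos {P a₀ b₀ : ℝ} {a b : ℝ → ℝ} (hP : 0 < P)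
    (ha : Tendsto a atTop (𝓝 a₀)) (hb : Tendsto b atTop (𝓝 b₀)) :
    ∃ M₀, ∀ᶠ t in atTop, ∀ M ≥ M₀,
      acgnField P (a t) (b t) M < 0 ∧ 0 < acgnField P (a t) (b t) (-M) := by
  obtain ⟨K, hK⟩ := (ha.abs.add (hb.div_const √2).abs).isBoundedUnder_le.eventually_le
  refine ⟨max 1 ((|P / √2| + K + 1) / P), ?_⟩
  filter_upwards [hK] with t ht M hM
  have hM1 : 1 ≤ M := le_of_max_le_left hM
  have hPM : |P / √2| + |a t| + |b t / √2| < P * M := by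
    have := (div_le_iff₀' hP).1 (le_of_max_le_right hM)
    linarith
  exact ⟨cubic_neg_of_abs_add_lt hM1 hPM, cubic_pos_of_abs_add_lt hM1 hPM⟩

theorem ou_acgn_ode_limit_is_root_general (P : ℝ) (hP : 0 < P) (p q : ℝ → ℝ) (pinf qinf : ℝ)
    (hpl : Filter.Tendsto p Filter.atTop (nhds pinf))
    (hql : Filter.Tendsto q Filter.atTop (nhds qinf))
    (g : ℝ → ℝ) (hg : ContDiffOn ℝ 1 g (Set.Ici (0:ℝ)))
    (hode : ∀ t ∈ Set.Ici (0:ℝ), derivWithin g (Set.Ici (0:ℝ)) t =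
      -P * g t ^ 3 + (P / Real.sqrt 2) * g t ^ 2 + p t * g t + q t / Real.sqrt 2) :
    ∃ r : ℝ, Filter.Tendsto g Filter.atTop (nhds r) ∧
      -P * r ^ 3 + (P / Real.sqrt 2) * r ^ 2 + pinf * r + qinf / Real.sqrt 2 = 0 := by
  have hode' : ∀ t ∈ Ici (0:ℝ), HasDerivWithinAt g (acgnField P (p t) (q t) (g t)) (Ici 0) t :=
    fun t ht => by
      rw [acgnField, ← hode t ht]
      exact (hg.differentiableOn one_ne_zero t ht).hasDerivWithinAt
  obtain ⟨M₀, hM₀⟩ := eventually_acgnField_neg_and_pos hP hpl hql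
  obtain ⟨L, hL⟩ := exists_tendsto_of_eventually_le_or_ge (finite_setOf_cubic_eq_zero hP.ne')
    (isBoundedUnder_abs_of_rhs_neg_pos hode' hM₀) fun c hc =>
      eventually_le_or_ge_of_tendsto_rhs hode' (hpl.acgnField hql tendsto_const_nhds) hc
  refine ⟨L, hL, eq_zero_of_tendsto_of_tendsto_deriv ?_ hL (hpl.acgnField hql hL)⟩
  filter_upwards [eventually_gt_atTop 0] with t ht
  exact (hode' t ht.le).hasDerivAt (Ici_mem_nhds ht)

/-- If in addition p(t) → p∞ and q(t) → q∞ as t → ∞, then the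
solution g of the IVP converges as t → ∞, and its limit is a real root of the
limiting cubic −P·y³ + (P/√2)·y² + p∞·y + q∞/√2. -/
theorem ou_acgn_ode_limit_is_root (P : ℝ) (hP : 0 < P) (p q : ℝ → ℝ) (pinf qinf : ℝ)
    (hp : ContinuousOn p (Set.Ici (0:ℝ))) (hq : ContinuousOn q (Set.Ici (0:ℝ)))
    (hpl : Filter.Tendsto p Filter.atTop (nhds pinf))
    (hql : Filter.Tendsto q Filter.atTop (nhds qinf))
    (g : ℝ → ℝ) (hg : ContDiffOn ℝ 1 g (Set.Ici (0:ℝ))) (hg0 : g 0 = 1 / Real.sqrt 2)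
    (hode : ∀ t ∈ Set.Ici (0:ℝ), derivWithin g (Set.Ici (0:ℝ)) t =
      -P * g t ^ 3 + (P / Real.sqrt 2) * g t ^ 2 + p t * g t + q t / Real.sqrt 2) :
    ∃ r : ℝ, Filter.Tendsto g Filter.atTop (nhds r) ∧
      -P * r ^ 3 + (P / Real.sqrt 2) * r ^ 2 + pinf * r + qinf / Real.sqrt 2 = 0 :=
  ou_acgn_ode_limit_is_root_general P hP p q pinf qinf hpl hql g hg hode
end

section
/- Let P > 0, let l_u : [0,∞) → ℝ be continuous, and let l_d : [0,∞) → ℝ be continuously differentiable with l_d(t) ≠ 0 for all t ≥ 0. Let g be a continuously differentiable solution of g′(t) = −P·g(t)³ + (P/√2)·g(t)² − (l_d′(t)/l_d(t))·g(t) + (l_d′(t)+l_u(t))/(√2·l_d(t)) with g(0) = 1/√2, set A(t) = √P·exp(∫₀ᵗ P·g(s)² ds) and H(t) = A(t) + (1/l_d(t))·∫₀ᵗ l_u(s)·A(s) ds. Then for all t ≥ 0: (i) 2·A(t)·A′(t) = P·H(t)², and (ii) A(t)² = P·(1 + ∫₀ᵗ H(s)² ds). -/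
/-! Along a solution of the Abel equation, and since `A' = P g² A`, the quantity
`(√2 g - 1) A l_d` has derivative `l_u A`; it vanishes at `0` because `g 0 = 1 / √2`, so it equals
`∫₀ᵗ l_u A`, which says exactly that `H = √2 g A`. Hence `2 A A' = 2 P g² A² = P H²`, and
integrating this from `A 0 ^ 2 = P` gives the second identity. -/

open Set Real

section IntegralIci

variable {E : Type*} [NormedAddCommGroup E] [NormedSpace ℝ E] [CompleteSpace E]
  {a t : ℝ} {f f' : ℝ → E}

theorem hasDerivWithinAt_integral_Ici (hf : ContinuousOn f (Ici a)) (ht : a ≤ t) :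
    HasDerivWithinAt (fun u => ∫ s in a..u, f s) (f t) (Ici a) t := by
  have hint : IntervalIntegrable f MeasureTheory.volume a t :=
    (hf.mono (uIcc_of_le ht ▸ Icc_subset_Ici_self)).intervalIntegrable
  have hmeas := hf.aestronglyMeasurable (μ := MeasureTheory.volume) measurableSet_Ici
  rcases ht.eq_or_lt with rfl | hlt
  · exact intervalIntegral.integral_hasDerivWithinAt_right (t := Ioi a) hint
      ⟨Ici a, nhdsWithin_mono a Ioi_subset_Ici_self self_mem_nhdsWithin, hmeas⟩
      ((hf a self_mem_Ici).mono Ioi_subset_Ici_self)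
  · have hnhds : Ici a ∈ nhds t := Ici_mem_nhds hlt
    exact (intervalIntegral.integral_hasDerivAt_right hint ⟨Ici a, hnhds, hmeas⟩
      (hf.continuousAt hnhds)).hasDerivWithinAt

theorem integral_eq_sub_of_hasDerivWithinAt_Ici
    (hf : ∀ x ∈ Ici a, HasDerivWithinAt f (f' x) (Ici a) x) (hf' : ContinuousOn f' (Ici a))
    (ht : a ≤ t) : ∫ s in a..t, f' s = f t - f a :=
  intervalIntegral.integral_eq_sub_of_hasDeriv_right_of_le ht
    (fun x hx => (hf x hx.1).continuousWithinAt.mono Icc_subset_Ici_self)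
    (fun x hx => (hf x hx.1.le).mono (Ioi_subset_Ici_self.trans (Ici_subset_Ici.2 hx.1.le)))
    (hf'.mono (uIcc_of_le ht ▸ Icc_subset_Ici_self)).intervalIntegrable

end IntegralIci

theorem hasDerivWithinAt_const_mul_exp_integral_Ici {q : ℝ → ℝ} {a t : ℝ} (c : ℝ)
    (hq : ContinuousOn q (Ici a)) (ht : a ≤ t) :
    HasDerivWithinAt (fun u => c * exp (∫ s in a..u, q s))
      (q t * (c * exp (∫ s in a..t, q s))) (Ici a) t :=
  ((hasDerivWithinAt_integral_Ici hq ht).exp.const_mul c).congr_deriv (by ring)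

section AbelInvariant

variable {P : ℝ} {lu ld ld' g A : ℝ → ℝ}

theorem hasDerivWithinAt_sqrt_two_mul_sub_one_mul {s : Set ℝ} {t : ℝ}
    (hg : HasDerivWithinAt g (-P * g t ^ 3 + (P / √2) * g t ^ 2 - (ld' t / ld t) * g t
        + (ld' t + lu t) / (√2 * ld t)) s t)
    (hA : HasDerivWithinAt A (P * g t ^ 2 * A t) s t)
    (hld : HasDerivWithinAt ld (ld' t) s t) (hldne : ld t ≠ 0) :
    HasDerivWithinAt (fun u => (√2 * g u - 1) * (A u * ld u)) (lu t * A t) s t := by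
  refine (((hg.const_mul √2).sub_const 1).mul (hA.mul hld)).congr_deriv ?_
  have : √2 ≠ 0 := by positivity
  simp only [Pi.mul_apply]
  field_simp
  ring

theorem add_one_div_mul_integral_eq_sqrt_two_mul_mul (hlu : ContinuousOn lu (Ici 0))
    (hg : ∀ t ∈ Ici (0:ℝ), HasDerivWithinAt g (-P * g t ^ 3 + (P / √2) * g t ^ 2
        - (ld' t / ld t) * g t + (ld' t + lu t) / (√2 * ld t)) (Ici 0) t)
    (hg0 : g 0 = 1 / √2)
    (hA : ∀ t ∈ Ici (0:ℝ), HasDerivWithinAt A (P * g t ^ 2 * A t) (Ici 0) t)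
    (hld : ∀ t ∈ Ici (0:ℝ), HasDerivWithinAt ld (ld' t) (Ici 0) t)
    (hldne : ∀ t ∈ Ici (0:ℝ), ld t ≠ 0) {t : ℝ} (ht : 0 ≤ t) :
    A t + (1 / ld t) * ∫ s in (0:ℝ)..t, lu s * A s = √2 * g t * A t := by
  have hAc : ContinuousOn A (Ici 0) := fun x hx => (hA x hx).continuousWithinAt
  rw [integral_eq_sub_of_hasDerivWithinAt_Ici
    (fun x hx => hasDerivWithinAt_sqrt_two_mul_sub_one_mul (hg x hx) (hA x hx) (hld x hx)
      (hldne x hx)) (hlu.mul hAc) ht, hg0]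
  have := hldne t ht
  field_simp
  ring

end AbelInvariant

theorem sk_amplitude_derivative_identities_general (P : ℝ) (hP : 0 < P) (lu ld ld' : ℝ → ℝ)
    (hlu : ContinuousOn lu (Set.Ici (0:ℝ)))
    (hld : ∀ t ∈ Set.Ici (0:ℝ), HasDerivWithinAt ld (ld' t) (Set.Ici (0:ℝ)) t)
    (hldne : ∀ t ∈ Set.Ici (0:ℝ), ld t ≠ 0)
    (g : ℝ → ℝ) (hg : ContDiffOn ℝ 1 g (Set.Ici (0:ℝ))) (hg0 : g 0 = 1 / Real.sqrt 2)
    (hode : ∀ t ∈ Set.Ici (0:ℝ), derivWithin g (Set.Ici (0:ℝ)) t =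
      -P * g t ^ 3 + (P / Real.sqrt 2) * g t ^ 2 - (ld' t / ld t) * g t
        + (ld' t + lu t) / (Real.sqrt 2 * ld t))
    (A : ℝ → ℝ)
    (hA : ∀ t, A t = Real.sqrt P * Real.exp (∫ s in (0:ℝ)..t, P * g s ^ 2))
    (H : ℝ → ℝ)
    (hH : ∀ t, H t = A t + (1 / ld t) * ∫ s in (0:ℝ)..t, lu s * A s) :
    ∀ t ∈ Set.Ici (0:ℝ),
      (∃ a : ℝ, HasDerivWithinAt A a (Set.Ici (0:ℝ)) t ∧ 2 * A t * a = P * H t ^ 2) ∧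
      A t ^ 2 = P * (1 + ∫ s in (0:ℝ)..t, H s ^ 2) := by
  have hgc : ContinuousOn g (Ici 0) := hg.continuousOn
  have hg' : ∀ t ∈ Ici (0:ℝ), HasDerivWithinAt g (-P * g t ^ 3 + (P / √2) * g t ^ 2
      - (ld' t / ld t) * g t + (ld' t + lu t) / (√2 * ld t)) (Ici 0) t := fun t ht =>
    hode t ht ▸ (hg.differentiableOn one_ne_zero t ht).hasDerivWithinAt
  have hA' : ∀ t ∈ Ici (0:ℝ), HasDerivWithinAt A (P * g t ^ 2 * A t) (Ici 0) t := by
    intro t ht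
    rw [funext hA]
    exact hasDerivWithinAt_const_mul_exp_integral_Ici (q := fun s => P * g s ^ 2) (√P)
        (continuousOn_const.mul (hgc.pow 2)) ht
  have hHA : ∀ t ∈ Ici (0:ℝ), H t = √2 * g t * A t := fun t ht =>
    (hH t).trans (add_one_div_mul_integral_eq_sqrt_two_mul_mul hlu hg' hg0 hA' hld hldne ht)
  have hAA' : ∀ t ∈ Ici (0:ℝ), 2 * A t * (P * g t ^ 2 * A t) = P * H t ^ 2 := by
    intro t ht
    rw [hHA t ht, mul_pow, mul_pow, sq_sqrt zero_le_two]
    ring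
  have hHc : ContinuousOn H (Ici 0) :=
    ((continuousOn_const.mul hgc).mul fun t ht => (hA' t ht).continuousWithinAt).congr hHA
  intro t ht
  refine ⟨⟨_, hA' t ht, hAA' t ht⟩, ?_⟩
  have hftc := integral_eq_sub_of_hasDerivWithinAt_Ici (f := fun s => A s ^ 2)
    (f' := fun s => P * H s ^ 2)
    (fun x hx => ((hA' x hx).pow 2).congr_deriv (by rw [← hAA' x hx]; ring))
    (continuousOn_const.mul (hHc.pow 2)) ht
  rw [intervalIntegral.integral_const_mul, hA 0, intervalIntegral.integral_same, exp_zero,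
    mul_one, sq_sqrt hP.le] at hftc
  linear_combination -hftc

/-- With g solving the Abel equation,
A(t) = √P·exp(∫₀ᵗ P g(s)² ds) and H(t) = A(t) + (1/l_d(t))∫₀ᵗ l_u(s)A(s) ds,
for all t ≥ 0: (i) 2·A(t)·A′(t) = P·H(t)², and (ii) A(t)² = P·(1 + ∫₀ᵗ H(s)² ds). -/
theorem sk_amplitude_derivative_identities (P : ℝ) (hP : 0 < P) (lu ld ld' : ℝ → ℝ)
    (hlu : ContinuousOn lu (Set.Ici (0:ℝ)))
    (hld : ∀ t ∈ Set.Ici (0:ℝ), HasDerivWithinAt ld (ld' t) (Set.Ici (0:ℝ)) t)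
    (hld' : ContinuousOn ld' (Set.Ici (0:ℝ)))
    (hldne : ∀ t ∈ Set.Ici (0:ℝ), ld t ≠ 0)
    (g : ℝ → ℝ) (hg : ContDiffOn ℝ 1 g (Set.Ici (0:ℝ))) (hg0 : g 0 = 1 / Real.sqrt 2)
    (hode : ∀ t ∈ Set.Ici (0:ℝ), derivWithin g (Set.Ici (0:ℝ)) t =
      -P * g t ^ 3 + (P / Real.sqrt 2) * g t ^ 2 - (ld' t / ld t) * g t
        + (ld' t + lu t) / (Real.sqrt 2 * ld t))
    (A : ℝ → ℝ)
    (hA : ∀ t, A t = Real.sqrt P * Real.exp (∫ s in (0:ℝ)..t, P * g s ^ 2))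
    (H : ℝ → ℝ)
    (hH : ∀ t, H t = A t + (1 / ld t) * ∫ s in (0:ℝ)..t, lu s * A s) :
    ∀ t ∈ Set.Ici (0:ℝ),
      (∃ a : ℝ, HasDerivWithinAt A a (Set.Ici (0:ℝ)) t ∧ 2 * A t * a = P * H t ^ 2) ∧
      A t ^ 2 = P * (1 + ∫ s in (0:ℝ)..t, H s ^ 2) :=
  sk_amplitude_derivative_identities_general P hP lu ld ld' hlu hld hldne g hg hg0 hode A hA H hH
end
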